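/- Let A = (Q, Σ, ·, i, F) be a partially ordered DFA satisfying: for every letter c ∈ Σ and every state s such that s = i·v for some word v containing at least one occurrence of c, one has s·uc = s·cuc for every word u ∈ Σ*. Then for all letters a, b ∈ Σ and every state p such that p = i·w for some word w in which both a and b occur, it holds that p·ab = p·ba. -/
import Mathlib


/-- `subk k w` is the set of scattered subwords of `w` of length at most `k`. -/
def subk {α : Type*} (k : ℕ) (w : List α) : Set (List α) :=
  {u | u.length ≤ k ∧ u.Sublist w}

/-- Two words are `k`-equivalent if they have the same subwords of length at most `k`. -/
def kEquiv {α : Type*} (k : ℕ) (u v : List α) : Prop :=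
  subk k u = subk k v

/-- A language is `k`-piecewise testable (Simon's characterization):
`k`-equivalent words are equi-members. -/
def IsPT {α : Type*} (k : ℕ) (L : Language α) : Prop :=
  ∀ u v : List α, kEquiv k u v → (u ∈ L ↔ v ∈ L)

/-- A DFA is minimal if all states are reachable and pairwise distinguishable. -/
def IsMinimalDFA {α σ : Type*} (A : DFA α σ) : Prop :=
  (∀ q : σ, ∃ w : List α, A.eval w = q) ∧
  ∀ p q : σ,
    (∀ w : List α, (A.evalFrom p w ∈ A.accept ↔ A.evalFrom q w ∈ A.accept)) → p = q

/-- There is a simple path (pairwise distinct states) with `m` transitions in the DFA `A`. -/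
def DFAHasSimplePath {α σ : Type*} (A : DFA α σ) (m : ℕ) : Prop :=
  ∃ (qs : Fin (m + 1) → σ) (as : Fin m → α),
    Function.Injective qs ∧ ∀ i : Fin m, A.step (qs i.castSucc) (as i) = qs i.succ

/-- The depth of a DFA: the number of transitions on a longest simple path. -/
noncomputable def dfaDepth {α σ : Type*} (A : DFA α σ) : ℕ :=
  sSup {m | DFAHasSimplePath A m}

/-- There is a simple path (pairwise distinct states) with `m` transitions in the NFA `A`. -/
def NFAHasSimplePath {α σ : Type*} (A : NFA α σ) (m : ℕ) : Prop :=
  ∃ (qs : Fin (m + 1) → σ) (as : Fin m → α),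
    Function.Injective qs ∧ ∀ i : Fin m, qs i.succ ∈ A.step (qs i.castSucc) (as i)

/-- The depth of an NFA: the number of transitions on a longest simple path. -/
noncomputable def nfaDepth {α σ : Type*} (A : NFA α σ) : ℕ :=
  sSup {m | NFAHasSimplePath A m}

/-- Reachability between states of a DFA. -/
def dfaReach {α σ : Type*} (A : DFA α σ) (p q : σ) : Prop :=
  ∃ w : List α, A.evalFrom p w = q

/-- A DFA is partially ordered if its reachability relation is a partial order. -/
def IsPartiallyOrderedDFA {α σ : Type*} (A : DFA α σ) : Prop :=
  ∀ p q : σ, dfaReach A p q → dfaReach A q p → p = q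

/-- A DFA is confluent if it is `Γ`-confluent for every subalphabet `Γ`. -/
def IsConfluentDFA {α σ : Type*} (A : DFA α σ) : Prop :=
  ∀ (Γ : Set α) (q : σ) (u v : List α), (∀ a ∈ u, a ∈ Γ) → (∀ a ∈ v, a ∈ Γ) →
    ∃ w : List α, (∀ a ∈ w, a ∈ Γ) ∧
      A.evalFrom (A.evalFrom q u) w = A.evalFrom (A.evalFrom q v) w

/-- Commutativity claim: in a partially ordered DFA satisfying the `s·uc = s·cuc`
condition, letters that already occurred commute. -/
theorem stmt6 {α σ : Type*} [Fintype α] [Fintype σ] (A : DFA α σ)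
    (hpo : IsPartiallyOrderedDFA A)
    (hcond : ∀ (c : α) (s : σ), (∃ v : List α, A.eval v = s ∧ c ∈ v) →
      ∀ u : List α, A.evalFrom s (u ++ [c]) = A.evalFrom s (c :: (u ++ [c]))) :
    ∀ (a b : α) (p : σ), (∃ w : List α, A.eval w = p ∧ a ∈ w ∧ b ∈ w) →
      A.evalFrom p [a, b] = A.evalFrom p [b, a] := by
  rintro a b p ⟨w, hw, ha, hb⟩
  have h1 := hcond b p ⟨w, hw, hb⟩ [a]
  have h2 := hcond a p ⟨w, hw, ha⟩ [b]
  simp only [List.cons_append, List.nil_append] at h1 h2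
  apply hpo
  · exact ⟨[a], by simp [DFA.evalFrom] at h1 h2 ⊢; rw [← h2]⟩
  · exact ⟨[b], by simp [DFA.evalFrom] at h1 h2 ⊢; rw [← h1]⟩
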